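/- In an ordered budget game, let (s,≺) be any state whose strategy profile s maximizes the social welfare over all strategy profiles. Then (s,≺) is a super strong equilibrium: no coalition C of players can jointly change strategies (newly chosen tasks appended at the end of every resource order) so that every member of C weakly increases her utility and at least one member strictly increases it. In particular s is a pure Nash equilibrium, so the price of stability and the price of super strong stability of ordered budget games equal 1. -/

import Mathlib

noncomputable section

open Finset

/-- A (standard) budget game: finitely many players `ι`, resources `ρ` and tasks `τ`.
Each resource has a positive budget, each task a nonnegative demand on every resource,
each task belongs to a unique player (`owner`), and each player has a nonempty finite
family of strategies, each strategy being a set of her own tasks. -/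
structure BudgetGame (ι ρ τ : Type*) [Fintype ι] [Fintype ρ] [Fintype τ]
    [DecidableEq ι] [DecidableEq τ] where
  budget : ρ → ℝ
  budget_pos : ∀ r, 0 < budget r
  demand : τ → ρ → ℝ
  demand_nonneg : ∀ t r, 0 ≤ demand t r
  owner : τ → ι
  strat : ι → Finset (Finset τ)
  strat_nonempty : ∀ i, (strat i).Nonempty
  strat_owned : ∀ i, ∀ A ∈ strat i, ∀ t ∈ A, owner t = i

namespace BudgetGame

variable {ι ρ τ : Type*} [Fintype ι] [Fintype ρ] [Fintype τ]
  [DecidableEq ι] [DecidableEq τ]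

/-- `s` is a strategy profile: player `i` plays a strategy from her strategy set. -/
def Valid (G : BudgetGame ι ρ τ) (s : ι → Finset τ) : Prop :=
  ∀ i, s i ∈ G.strat i

/-- Total demand `D_r(s)` of the chosen tasks on resource `r`. -/
def totalDemand (G : BudgetGame ι ρ τ) (s : ι → Finset τ) (r : ρ) : ℝ :=
  ∑ i, ∑ t ∈ s i, G.demand t r

/-- Standard (proportional) utility `u_{t,r}(s) = min(t(r), b_r·t(r)/D_r(s))`
of a chosen task `t` from resource `r`. -/
def stdTaskUtil (G : BudgetGame ι ρ τ) (s : ι → Finset τ) (t : τ) (r : ρ) : ℝ :=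
  min (G.demand t r) (G.budget r * G.demand t r / G.totalDemand s r)

/-- Utility of player `i` in the standard budget game. -/
def stdUtil (G : BudgetGame ι ρ τ) (s : ι → Finset τ) (i : ι) : ℝ :=
  ∑ t ∈ s i, ∑ r, G.stdTaskUtil s t r

/-- Social welfare in the standard budget game. -/
def stdWelfare (G : BudgetGame ι ρ τ) (s : ι → Finset τ) : ℝ :=
  ∑ i, G.stdUtil s i

/-- Pure Nash equilibrium of the standard budget game. -/
def stdNE (G : BudgetGame ι ρ τ) (s : ι → Finset τ) : Prop :=
  G.Valid s ∧ ∀ i, ∀ a ∈ G.strat i,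
    G.stdUtil (Function.update s i a) i ≤ G.stdUtil s i

/-- An ordering vector `≺ = (≺_r)_r` is encoded by injective rank functions:
`t' ≺_r t` iff `ord r t' < ord r t`. -/
def InjOrd (ord : ρ → τ → ℕ) : Prop :=
  ∀ r, Function.Injective (ord r)

/-- Total demand on `r` of the chosen tasks that come strictly before `t` in `≺_r`. -/
def prefixDemand (G : BudgetGame ι ρ τ) (s : ι → Finset τ) (ord : ρ → τ → ℕ)
    (t : τ) (r : ρ) : ℝ :=
  ∑ i, ∑ t' ∈ (s i).filter (fun t' => ord r t' < ord r t), G.demand t' r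

/-- Ordered utility `u_{t,r}(s,≺) = min(t(r), max(0, b_r − Σ_{t' ≺_r t chosen} t'(r)))`. -/
def ordTaskUtil (G : BudgetGame ι ρ τ) (s : ι → Finset τ) (ord : ρ → τ → ℕ)
    (t : τ) (r : ρ) : ℝ :=
  min (G.demand t r) (max 0 (G.budget r - G.prefixDemand s ord t r))

/-- Utility of player `i` in the ordered budget game. -/
def ordUtil (G : BudgetGame ι ρ τ) (s : ι → Finset τ) (ord : ρ → τ → ℕ) (i : ι) : ℝ :=
  ∑ t ∈ s i, ∑ r, G.ordTaskUtil s ord t r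

/-- Social welfare in the ordered budget game. -/
def ordWelfare (G : BudgetGame ι ρ τ) (s : ι → Finset τ) (ord : ρ → τ → ℕ) : ℝ :=
  ∑ i, G.ordUtil s ord i

/-- `ord'` arises from `ord` by appending the tasks of `newT` at the end of every
resource order: it is injective per resource, keeps the relative order of all tasks
not in `newT`, and places every task of `newT` after all of them. -/
def IsReorder (ord ord' : ρ → τ → ℕ) (newT : Finset τ) : Prop :=
  InjOrd ord' ∧
  (∀ (r : ρ), ∀ x ∉ newT, ∀ y ∉ newT, (ord' r x < ord' r y ↔ ord r x < ord r y)) ∧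
  (∀ (r : ρ), ∀ x ∉ newT, ∀ t ∈ newT, ord' r x < ord' r t)

/-- The tasks newly chosen when coalition `C` deviates from `s` to `s'`. -/
def newTasks (C : Finset ι) (s s' : ι → Finset τ) : Finset τ :=
  C.biUnion fun i => s' i \ s i

/-- Pure Nash equilibrium of the ordered budget game: no unilateral deviation
(with the deviator's new tasks appended at the end of every resource order)
strictly increases the deviator's utility. -/
def ordNE (G : BudgetGame ι ρ τ) (s : ι → Finset τ) (ord : ρ → τ → ℕ) : Prop :=
  G.Valid s ∧ InjOrd ord ∧
  ∀ i, ∀ a ∈ G.strat i, ∀ ord' : ρ → τ → ℕ, IsReorder ord ord' (a \ s i) →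
    G.ordUtil (Function.update s i a) ord' i ≤ G.ordUtil s ord i

/-- Strong equilibrium: no coalition can deviate (new tasks appended) so that
every member strictly improves. -/
def IsStrongEq (G : BudgetGame ι ρ τ) (s : ι → Finset τ) (ord : ρ → τ → ℕ) : Prop :=
  G.Valid s ∧ InjOrd ord ∧
  ¬ ∃ (C : Finset ι) (s' : ι → Finset τ) (ord' : ρ → τ → ℕ),
      C.Nonempty ∧ G.Valid s' ∧ (∀ j ∉ C, s' j = s j) ∧
      IsReorder ord ord' (newTasks C s s') ∧
      ∀ i ∈ C, G.ordUtil s ord i < G.ordUtil s' ord' i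

/-- Super strong equilibrium: no coalition can deviate (new tasks appended) so that
every member weakly improves and at least one member strictly improves. -/
def IsSuperStrongEq (G : BudgetGame ι ρ τ) (s : ι → Finset τ) (ord : ρ → τ → ℕ) : Prop :=
  G.Valid s ∧ InjOrd ord ∧
  ¬ ∃ (C : Finset ι) (s' : ι → Finset τ) (ord' : ρ → τ → ℕ),
      C.Nonempty ∧ G.Valid s' ∧ (∀ j ∉ C, s' j = s j) ∧
      IsReorder ord ord' (newTasks C s s') ∧
      (∀ i ∈ C, G.ordUtil s ord i ≤ G.ordUtil s' ord' i) ∧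
      (∃ i ∈ C, G.ordUtil s ord i < G.ordUtil s' ord' i)

end BudgetGame

/-!
Appending newly chosen tasks at the end of every order never moves a new task in front of an
old one, so every task that was already chosen keeps a prefix demand at most its old one and
hence at least its old utility. In particular the players outside a deviating coalition do not
lose, so a deviation in which all members weakly and one strictly gain raises the social
welfare, which is impossible when `s` is welfare maximal. A unilateral deviation is the
deviation of a one-player coalition.
-/

namespace BudgetGame

theorem newTasks_singleton_update {ι τ : Type*} [DecidableEq ι] [DecidableEq τ]
    (s : ι → Finset τ) (i : ι) (a : Finset τ) :
    newTasks {i} s (Function.update s i a) = a \ s i := by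
  simp [newTasks]

variable {ι ρ τ : Type*} [Fintype ι] [Fintype ρ] [Fintype τ] [DecidableEq ι] [DecidableEq τ]

theorem Valid.update {G : BudgetGame ι ρ τ} {s : ι → Finset τ} (hs : G.Valid s) {i : ι}
    {a : Finset τ} (ha : a ∈ G.strat i) : G.Valid (Function.update s i a) := by
  intro j
  rcases eq_or_ne j i with rfl | hj
  · simpa using ha
  · simpa [Function.update_of_ne hj] using hs j

variable (G : BudgetGame ι ρ τ)

theorem owner_mem_of_mem_newTasks {C : Finset ι} {s s' : ι → Finset τ} (hs' : G.Valid s')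
    {t : τ} (ht : t ∈ newTasks C s s') : G.owner t ∈ C := by
  obtain ⟨i, hi, hti⟩ := mem_biUnion.mp ht
  rwa [G.strat_owned i (s' i) (hs' i) t (mem_sdiff.mp hti).1]

theorem prefixDemand_le_of_notMem_newTasks {C : Finset ι} {s s' : ι → Finset τ}
    {ord ord' : ρ → τ → ℕ} (hfix : ∀ j ∉ C, s' j = s j)
    (hre : IsReorder ord ord' (newTasks C s s')) {t : τ} (ht : t ∉ newTasks C s s')
    (r : ρ) :
    G.prefixDemand s' ord' t r ≤ G.prefixDemand s ord t r := by
  refine sum_le_sum fun i _ =>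
    sum_le_sum_of_subset_of_nonneg ?_ fun t' _ _ => G.demand_nonneg t' r
  intro t' ht'
  obtain ⟨hmem, hlt⟩ := mem_filter.mp ht'
  have hold : t' ∉ newTasks C s s' := fun hnew => (hre.2.2 r t ht t' hnew).not_gt hlt
  have hsi : t' ∈ s i := by
    by_cases hiC : i ∈ C
    · by_contra hns
      exact hold (mem_biUnion.mpr ⟨i, hiC, mem_sdiff.mpr ⟨hmem, hns⟩⟩)
    · rwa [hfix i hiC] at hmem
  exact mem_filter.mpr ⟨hsi, (hre.2.1 r t' hold t ht).mp hlt⟩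

theorem ordTaskUtil_le_of_prefixDemand_le {s s' : ι → Finset τ} {ord ord' : ρ → τ → ℕ}
    {t : τ} {r : ρ} (h : G.prefixDemand s' ord' t r ≤ G.prefixDemand s ord t r) :
    G.ordTaskUtil s ord t r ≤ G.ordTaskUtil s' ord' t r :=
  min_le_min le_rfl (max_le_max le_rfl (sub_le_sub_left h _))

theorem ordUtil_le_of_notMem_coalition {C : Finset ι} {s s' : ι → Finset τ}
    {ord ord' : ρ → τ → ℕ} (hs : G.Valid s) (hs' : G.Valid s') (hfix : ∀ j ∉ C, s' j = s j)
    (hre : IsReorder ord ord' (newTasks C s s')) {j : ι} (hj : j ∉ C) :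
    G.ordUtil s ord j ≤ G.ordUtil s' ord' j := by
  rw [ordUtil, ordUtil, hfix j hj]
  refine sum_le_sum fun t htj => sum_le_sum fun r _ => ?_
  have hold : t ∉ newTasks C s s' := fun hnew => hj <| by
    simpa only [G.strat_owned j (s j) (hs j) t htj] using
      G.owner_mem_of_mem_newTasks hs' hnew
  exact G.ordTaskUtil_le_of_prefixDemand_le
    (G.prefixDemand_le_of_notMem_newTasks hfix hre hold r)

theorem ordWelfare_lt_of_coalition_improves {C : Finset ι} {s s' : ι → Finset τ}
    {ord ord' : ρ → τ → ℕ} (hs : G.Valid s) (hs' : G.Valid s') (hfix : ∀ j ∉ C, s' j = s j)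
    (hre : IsReorder ord ord' (newTasks C s s'))
    (hweak : ∀ i ∈ C, G.ordUtil s ord i ≤ G.ordUtil s' ord' i)
    (hstrict : ∃ i ∈ C, G.ordUtil s ord i < G.ordUtil s' ord' i) :
    G.ordWelfare s ord < G.ordWelfare s' ord' := by
  have hall (i : ι) : G.ordUtil s ord i ≤ G.ordUtil s' ord' i := by
    by_cases hiC : i ∈ C
    · exact hweak i hiC
    · exact G.ordUtil_le_of_notMem_coalition hs hs' hfix hre hiC
  obtain ⟨i, -, hi⟩ := hstrict
  exact sum_lt_sum (fun i _ => hall i) ⟨i, mem_univ i, hi⟩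

theorem isSuperStrongEq_of_ordWelfare_le {s : ι → Finset τ} {ord : ρ → τ → ℕ}
    (hs : G.Valid s) (hord : InjOrd ord)
    (hopt : ∀ s' : ι → Finset τ, G.Valid s' → ∀ ord' : ρ → τ → ℕ, InjOrd ord' →
      G.ordWelfare s' ord' ≤ G.ordWelfare s ord) :
    G.IsSuperStrongEq s ord := by
  refine ⟨hs, hord, ?_⟩
  rintro ⟨C, s', ord', -, hs', hfix, hre, hweak, hstrict⟩
  exact (hopt s' hs' ord' hre.1).not_gt
    (G.ordWelfare_lt_of_coalition_improves hs hs' hfix hre hweak hstrict)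

theorem IsSuperStrongEq.ordNE {s : ι → Finset τ} {ord : ρ → τ → ℕ}
    (h : G.IsSuperStrongEq s ord) : G.ordNE s ord := by
  refine ⟨h.1, h.2.1, fun i a ha ord' hre => not_lt.mp fun hlt => h.2.2 ?_⟩
  refine ⟨{i}, Function.update s i a, ord', singleton_nonempty i, h.1.update ha,
    fun j hj => Function.update_of_ne (mem_singleton.not.mp hj) a s, ?_, ?_,
    i, mem_singleton_self i, hlt⟩
  · rwa [newTasks_singleton_update]
  · intro j hj
    rw [mem_singleton.mp hj]
    exact hlt.le

end BudgetGame

open BudgetGame in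
/-- any state `(s,≺)` whose strategy profile maximizes the (order
independent) social welfare is a super strong equilibrium, and in particular a pure
Nash equilibrium; hence the price of (super strong) stability of ordered budget games
is `1`. -/
theorem stmt_11 {ι ρ τ : Type*} [Fintype ι] [Fintype ρ] [Fintype τ]
    [DecidableEq ι] [DecidableEq τ]
    (G : BudgetGame ι ρ τ) (s : ι → Finset τ) (ord : ρ → τ → ℕ)
    (hs : G.Valid s) (hord : InjOrd ord)
    (hopt : ∀ s' : ι → Finset τ, G.Valid s' → ∀ ord' : ρ → τ → ℕ, InjOrd ord' →
      G.ordWelfare s' ord' ≤ G.ordWelfare s ord) :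
    G.IsSuperStrongEq s ord ∧ G.ordNE s ord :=
  have hsse := G.isSuperStrongEq_of_ordWelfare_le hs hord hopt
  ⟨hsse, hsse.ordNE⟩
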